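/- arXiv:1409.2445 — 2 statements merged into one kernel-verified Lean document; each statement's English description precedes it below -/
import Mathlib

section
/- Let P be a finite pure poset (all maximal chains of P have the same length). Then the map depth : \hat{P} \to \mathbb{N}, where depth(x) is the rank of the subposet {y \in \hat{P} : y \ge x}, belongs to T(P) and is the unique minimal element of T(P); that is, for every v \in T(P) one has v \ge depth in the partial order of T(P), i.e. v(p) \ge depth(p) for all p and v - depth is order-reversing. -/
open Classical

/-- `Hat P` is the poset `P` with a new least element `-∞ = ⊥` and a new
greatest element `∞ = ⊤` adjoined. -/
abbrev Hat (P : Type*) := WithBot (WithTop P)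

/-- The canonical inclusion of `P` into `Hat P`. -/
def toHat {P : Type*} (x : P) : Hat P := ((x : WithTop P) : WithBot (WithTop P))

/-- The rank of a poset: the maximal length (number of covering steps) of a
chain, encoded as the maximal `n` admitting a strictly increasing sequence of
`n + 1` elements. -/
noncomputable def rankN (Q : Type*) [Preorder Q] : ℕ :=
  sSup {n : ℕ | ∃ f : Fin (n + 1) → Q, StrictMono f}

/-- The height of `x` in a poset `Q`: the rank of the subposet `{y | y ≤ x}`. -/
noncomputable def heightN {Q : Type*} [Preorder Q] (x : Q) : ℕ :=
  sSup {n : ℕ | ∃ f : Fin (n + 1) → Q, StrictMono f ∧ ∀ i, f i ≤ x}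

/-- The depth of `x` in a poset `Q`: the rank of the subposet `{y | x ≤ y}`. -/
noncomputable def depthN {Q : Type*} [Preorder Q] (x : Q) : ℕ :=
  sSup {n : ℕ | ∃ f : Fin (n + 1) → Q, StrictMono f ∧ ∀ i, x ≤ f i}

/-- `v` belongs to `S(P)`: `v : Hat P → ℕ` is order-reversing with `v ∞ = 0`. -/
def memS (P : Type*) [PartialOrder P] (v : Hat P → ℕ) : Prop :=
  v ⊤ = 0 ∧ ∀ p q : Hat P, p ≤ q → v q ≤ v p

/-- `v` belongs to `T(P)`: `v : Hat P → ℕ` is strictly order-reversing with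
`v ∞ = 0`. -/
def memT (P : Type*) [PartialOrder P] (v : Hat P → ℕ) : Prop :=
  v ⊤ = 0 ∧ ∀ p q : Hat P, p < q → v q < v p

/-- The partial order of `T(P)`: `v ≥ w` iff `v` dominates `w` pointwise and the
pointwise difference `v - w` is order-reversing. -/
def Tge (P : Type*) [PartialOrder P] (v w : Hat P → ℕ) : Prop :=
  (∀ p : Hat P, w p ≤ v p) ∧ ∀ p q : Hat P, p ≤ q → v q - w q ≤ v p - w p

/-- `v` is a minimal element of the poset `T(P)`. -/
def IsMinT (P : Type*) [PartialOrder P] (v : Hat P → ℕ) : Prop :=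
  memT P v ∧ ∀ w : Hat P → ℕ, memT P w → Tge P v w → w = v

/-- A poset is pure if all its maximal chains have the same length, equivalently
the same cardinality. -/
def IsPure (P : Type*) [PartialOrder P] : Prop :=
  ∀ C D : Set P, IsMaxChain (· ≤ ·) C → IsMaxChain (· ≤ ·) D → C.ncard = D.ncard

/-!
Purity of `P` passes to `Hat P`, whose maximal chains are exactly the saturated chains from `⊥`
to `⊤`; since every chain refines to one of these, they all have the maximal length `L`.
A longest chain through `p` has length `height p + coheight p = L`, while a saturated chain
through a cover `p ⋖ q` has length at most `height p + 1 + coheight q`. Hence the depth (the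
coheight) drops by exactly one along covers. A strictly decreasing `v` drops by at least one
along covers and dominates the coheight, so `v - depth` is antitone along covers, hence antitone.
-/

open Set
open Order (height coheight)

abbrev CovBySeries (α : Type*) [Preorder α] := RelSeries {(a, b) : α × α | a ⋖ b}

namespace CovBySeries

variable {α : Type*} [PartialOrder α]

def toLTSeries (s : CovBySeries α) : LTSeries α :=
  .mk s.length s (Fin.strictMono_iff_lt_succ.2 fun i => CovBy.lt (s.step i))

lemma isMaxChain_range [BoundedOrder α] {s : CovBySeries α} (h₀ : s.head = ⊥) (h : s.last = ⊤) :
    IsMaxChain (· ≤ ·) (range s) :=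
  .range_fin_of_covBy h₀ h fun i => CovBy.wcovBy (s.step i)

lemma ncard_range (s : CovBySeries α) : (range s).ncard = s.length + 1 := by
  rw [ncard_range_of_injective (f := s) s.toLTSeries.strictMono.injective, Nat.card_fin]

end CovBySeries

section Finite

variable {α : Type*} [Preorder α] [Finite α]

lemma coheight_lt_top_of_finite (x : α) : coheight x < ⊤ := by
  have := Fintype.ofFinite α
  exact (Order.coheight_le (n := Fintype.card α) fun p _ => mod_cast p.length_lt_card.le).trans_lt
    (ENat.natCast_lt_top _)

lemma height_lt_top_of_finite (x : α) : height x < ⊤ :=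
  coheight_lt_top_of_finite (α := αᵒᵈ) (OrderDual.toDual x)

end Finite

section Pure

variable {α : Type*} [PartialOrder α] [BoundedOrder α]

theorem IsPure.length_eq (hα : IsPure α) {s t : CovBySeries α} (hs₀ : s.head = ⊥)
    (hs : s.last = ⊤) (ht₀ : t.head = ⊥) (ht : t.last = ⊤) : s.length = t.length := by
  have := hα _ _ (CovBySeries.isMaxChain_range hs₀ hs) (CovBySeries.isMaxChain_range ht₀ ht)
  rwa [CovBySeries.ncard_range, CovBySeries.ncard_range, Nat.add_right_cancel_iff] at this

variable [Finite α]

theorem IsPure.length_le_length (hα : IsPure α) (s : LTSeries α) {t : CovBySeries α}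
    (ht₀ : t.head = ⊥) (ht : t.last = ⊤) : s.length ≤ t.length := by
  obtain ⟨u, i, -, hu₀, hu⟩ := s.exists_relSeries_covBy_and_head_eq_bot_and_last_eq_bot
  have := Fintype.card_le_of_embedding i
  simp only [Fintype.card_fin] at this
  rw [← hα.length_eq hu₀ hu ht₀ ht]
  omega

lemma exists_covBySeries_length_le_of_covBy {p q : α} (hpq : p ⋖ q) :
    ∃ t : CovBySeries α, t.head = ⊥ ∧ t.last = ⊤ ∧
      (t.length : ℕ∞) ≤ height p + 1 + coheight q := by
  obtain ⟨t, i, hti, ht₀, ht⟩ := LTSeries.exists_relSeries_covBy_and_head_eq_bot_and_last_eq_bot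
    ((RelSeries.singleton _ p).snoc q hpq.lt)
  refine ⟨t, ht₀, ht, ?_⟩
  set T := CovBySeries.toLTSeries t
  set j := i 0
  set k := i (Fin.last 1)
  have hTj : T j = p := congr_fun hti 0
  have hTk : T k = q := congr_fun hti (Fin.last 1)
  have hjk : j < k := T.strictMono.lt_iff_lt.1 (hTj ▸ hTk ▸ hpq.lt)
  -- `p ⋖ q` leaves no room between the positions of `p` and `q` in the refinement.
  have hkj : (k : ℕ) ≤ j + 1 := by
    by_contra! hlt
    set m : Fin (t.length + 1) := ⟨j + 1, by omega⟩
    exact hpq.2 (hTj ▸ T.strictMono (show j < m from Fin.lt_def.2 (by simp [m])))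
      (hTk ▸ T.strictMono (show m < k from Fin.lt_def.2 (by simp [m]; omega)))
  have hp : (j : ℕ∞) ≤ height p := hTj ▸ Order.index_le_height T j
  have hq : (k.rev : ℕ∞) ≤ coheight q := hTk ▸ Order.rev_index_le_coheight T k
  have : t.length ≤ (j : ℕ) + 1 + k.rev := by simp only [Fin.val_rev]; omega
  calc (t.length : ℕ∞) ≤ (j : ℕ) + 1 + (k.rev : ℕ) := mod_cast this
    _ ≤ height p + 1 + coheight q := by gcongr

theorem IsPure.coheight_eq_coheight_add_one (hα : IsPure α) {p q : α} (hpq : p ⋖ q) :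
    coheight p = coheight q + 1 := by
  refine le_antisymm ?_ (Order.coheight_add_one_le hpq.lt)
  obtain ⟨h, hh⟩ := ENat.ne_top_iff_exists.1 (height_lt_top_of_finite p).ne
  obtain ⟨c, hc⟩ := ENat.ne_top_iff_exists.1 (coheight_lt_top_of_finite p).ne
  obtain ⟨d, hd⟩ := ENat.ne_top_iff_exists.1 (coheight_lt_top_of_finite q).ne
  obtain ⟨a, ha, rfl⟩ := Order.exists_series_of_height_eq_coe p hh.symm
  obtain ⟨b, hb, rfl⟩ := Order.exists_series_of_coheight_eq_coe p hc.symm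
  obtain ⟨t, ht₀, ht, hlen⟩ := exists_covBySeries_length_le_of_covBy hpq
  have hab := hα.length_le_length (a.smash b (ha.trans hb.symm)) ht₀ ht
  rw [← hh, ← hd] at hlen
  rw [← hc, ← hd]
  norm_cast at hlen ⊢
  simp only [RelSeries.smash_length] at hab
  omega

end Pure

section Depth

variable {Q : Type*} [PartialOrder Q]

lemma coheight_le_of_strictAnti {v : Q → ℕ} (hv : StrictAnti v) (x : Q) : coheight x ≤ v x := by
  simpa using Order.coheight_le_coheight_apply_of_strictMono (β := ℕᵒᵈ) _ hv.dual_right x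

variable [Finite Q]

lemma coe_depthN (x : Q) : (depthN x : ℕ∞) = coheight x := by
  obtain ⟨n, hn⟩ := ENat.ne_top_iff_exists.1 (coheight_lt_top_of_finite x).ne
  rw [← hn, depthN, IsGreatest.csSup_eq ⟨?_, ?_⟩]
  · obtain ⟨p, hp, rfl⟩ := Order.exists_series_of_coheight_eq_coe x hn.symm
    exact ⟨p, p.strictMono, fun i => hp ▸ p.monotone (Fin.zero_le i)⟩
  · rintro m ⟨f, hf, hx⟩
    exact_mod_cast hn ▸ Order.length_le_coheight (p := LTSeries.mk m f hf) (hx 0)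

lemma depthN_top [OrderTop Q] : depthN (⊤ : Q) = 0 := by
  have := Order.coheight_top Q
  rwa [← coe_depthN, Nat.cast_eq_zero] at this

lemma depthN_strictAnti : StrictAnti (depthN : Q → ℕ) := fun x y hxy => by
  have := Order.coheight_strictAnti hxy (coheight_lt_top_of_finite y)
  rwa [← coe_depthN, ← coe_depthN, Nat.cast_lt] at this

lemma depthN_le_of_strictAnti {v : Q → ℕ} (hv : StrictAnti v) (x : Q) : depthN x ≤ v x := by
  exact_mod_cast coe_depthN x ▸ coheight_le_of_strictAnti hv x

theorem IsPure.depthN_eq_depthN_add_one [BoundedOrder Q] (hQ : IsPure Q) {p q : Q} (hpq : p ⋖ q) :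
    depthN p = depthN q + 1 := by
  have := hQ.coheight_eq_coheight_add_one hpq
  rw [← coe_depthN, ← coe_depthN] at this
  exact_mod_cast this

end Depth

section Hat

variable {P : Type*}

lemma toHat_injective : Function.Injective (toHat (P := P)) := fun _ _ h => by simpa [toHat] using h

lemma exists_toHat_of_ne_bot_of_ne_top {y : Hat P} (hbot : y ≠ ⊥) (htop : y ≠ ⊤) :
    ∃ x, toHat x = y := by
  induction y using WithBot.recBotCoe with
  | bot => exact absurd rfl hbot
  | coe z =>
    induction z using WithTop.recTopCoe with
    | top => exact absurd rfl htop
    | coe x => exact ⟨x, rfl⟩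

variable [PartialOrder P]

@[simp] lemma toHat_le_toHat {a b : P} : toHat a ≤ toHat b ↔ a ≤ b := by simp [toHat]

lemma IsMaxChain.preimage_toHat {C : Set (Hat P)} (hC : IsMaxChain (· ≤ ·) C) :
    IsMaxChain (· ≤ ·) (toHat ⁻¹' C) := by
  refine ⟨hC.1.preimage _ _ _ toHat_injective fun _ _ => toHat_le_toHat.1,
    fun D hD hsub => hsub.antisymm fun x hx => ?_⟩
  have hchain : IsChain (· ≤ ·) (C ∪ toHat '' D) := by
    refine isChain_union.2 ⟨hC.1, hD.image_of_map_rel _ _ _ fun _ _ => toHat_le_toHat.2, ?_⟩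
    rintro a ha _ ⟨d, hd, rfl⟩ had
    by_cases hbot : a = ⊥
    · exact .inl (hbot ▸ bot_le)
    by_cases htop : a = ⊤
    · exact .inr (htop ▸ le_top)
    obtain ⟨c, rfl⟩ := exists_toHat_of_ne_bot_of_ne_top hbot htop
    exact (hD (hsub ha) hd (ne_of_apply_ne _ had)).imp toHat_le_toHat.2 toHat_le_toHat.2
  rw [mem_preimage, hC.2 hchain subset_union_left]
  exact .inr ⟨x, hx, rfl⟩

lemma IsMaxChain.ncard_preimage_toHat_add_two [Finite P] {C : Set (Hat P)}
    (hC : IsMaxChain (· ≤ ·) C) : (toHat ⁻¹' C).ncard + 2 = C.ncard := by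
  have hends : {⊥, ⊤} ⊆ C := insert_subset hC.bot_mem (singleton_subset_iff.2 hC.top_mem)
  have hmid : C \ {⊥, ⊤} ⊆ range toHat := fun y hy => by
    simp only [mem_sdiff, mem_insert_iff, mem_singleton_iff, not_or] at hy
    exact exists_toHat_of_ne_bot_of_ne_top hy.2.1 hy.2.2
  have hpre : toHat ⁻¹' C = toHat ⁻¹' (C \ {⊥, ⊤}) := by
    ext x; simp [toHat]
  rw [hpre, ncard_preimage_of_injective_subset_range toHat_injective hmid, ncard_sdiff hends,
    ncard_pair bot_ne_top]
  have := ncard_le_ncard hends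
  rw [ncard_pair bot_ne_top] at this
  omega

theorem IsPure.hat [Finite P] (hP : IsPure P) : IsPure (Hat P) := fun C D hC hD => by
  have := hP _ _ hC.preimage_toHat hD.preimage_toHat
  rw [← hC.ncard_preimage_toHat_add_two, ← hD.ncard_preimage_toHat_add_two, this]

end Hat

/-- If `P` is a finite pure poset then the depth function belongs to `T(P)` and
is the unique minimal element of `T(P)`: every `v ∈ T(P)` satisfies `v ≥ depth`
in the partial order of `T(P)`. -/
theorem depth_isUniqueMin_of_isPure (P : Type*) [Fintype P] [PartialOrder P]
    (hP : IsPure P) :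
    memT P (fun x => depthN x) ∧
      ∀ v : Hat P → ℕ, memT P v → Tge P v (fun x => depthN x) := by
  refine ⟨⟨depthN_top, fun p q h => depthN_strictAnti h⟩, fun v hv => ?_⟩
  have hv_anti : StrictAnti v := fun p q => hv.2 p q
  refine ⟨depthN_le_of_strictAnti hv_anti, fun p q hpq => ?_⟩
  let : LocallyFiniteOrder (Hat P) := .ofFiniteIcc fun _ _ => Set.toFinite _
  refine (antitone_iff_forall_covBy fun x => v x - depthN x).2 (fun a b hab => ?_) hpq
  have hdepth := hP.hat.depthN_eq_depthN_add_one hab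
  have hv_step := hv_anti hab.lt
  have hb := depthN_le_of_strictAnti hv_anti b
  omega
end

section
/- Let P be a finite poset and suppose that every minimal element v of the poset T(P) satisfies v(-\infty) = rank \hat{P} (i.e. the lattice I(P) is level). Then height(x) + depth(y) \le rank \hat{P} + 1 for all x, y \in P such that x covers y in P. -/
/-!
Take `v p = max (depth p) (depth y - 1 + ℓ [p, x])`, the second term only for `p ≤ x`, where
`ℓ [p, x]` is the length of the interval. It lies in `T(P)`, and since `[y, x] = {y, x}` it
satisfies `v y ≤ depth y ≤ v x + 1`. A minimal `w ≤ v` in `T(P)` inherits `w y ≤ w x + 1`,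
because `v - w` is order-reversing. Since `w` drops by at least one at each step of a chain, a
longest chain from `-∞` up to `x` gives `height x + w x ≤ w (-∞) = rank`, and a longest chain
starting at `y` gives `depth y ≤ w y`.
-/

open Classical

open Set

section ChainLength

variable {Q : Type*} [Preorder Q]

noncomputable def chainLength (s : Set Q) : ℕ :=
  sSup {n : ℕ | ∃ f : Fin (n + 1) → Q, StrictMono f ∧ ∀ i, f i ∈ s}

theorem heightN_eq_chainLength (x : Q) : heightN x = chainLength (Iic x) := rfl

theorem depthN_eq_chainLength (x : Q) : depthN x = chainLength (Ici x) := rfl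

variable [Finite Q]

theorem bddAbove_chainLengths (s : Set Q) :
    BddAbove {n : ℕ | ∃ f : Fin (n + 1) → Q, StrictMono f ∧ ∀ i, f i ∈ s} := by
  refine ⟨Nat.card Q, fun n ⟨f, hf, _⟩ => ?_⟩
  have := Nat.card_le_card_of_injective f hf.injective
  rw [Nat.card_eq_fintype_card, Fintype.card_fin] at this
  omega

theorem le_chainLength {s : Set Q} {n : ℕ} {f : Fin (n + 1) → Q} (hf : StrictMono f)
    (hfs : ∀ i, f i ∈ s) : n ≤ chainLength s :=
  le_csSup (bddAbove_chainLengths s) ⟨f, hf, hfs⟩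

theorem exists_strictMono_chainLength {s : Set Q} (hs : s.Nonempty) :
    ∃ f : Fin (chainLength s + 1) → Q, StrictMono f ∧ ∀ i, f i ∈ s := by
  obtain ⟨a, ha⟩ := hs
  have h0 : 0 ∈ {n : ℕ | ∃ f : Fin (n + 1) → Q, StrictMono f ∧ ∀ i, f i ∈ s} :=
    ⟨fun _ => a, Subsingleton.strictMono (α := Fin 1) _, fun _ => ha⟩
  exact Nat.sSup_mem ⟨0, h0⟩ (bddAbove_chainLengths s)

theorem chainLength_mono {s t : Set Q} (hst : s ⊆ t) : chainLength s ≤ chainLength t :=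
  csSup_le_csSup' (bddAbove_chainLengths t) fun _ ⟨f, hf, hfs⟩ => ⟨f, hf, fun i => hst (hfs i)⟩

theorem chainLength_lt_ncard {s : Set Q} (hs : s.Nonempty) : chainLength s < s.ncard := by
  obtain ⟨f, hf, hfs⟩ := exists_strictMono_chainLength hs
  have hcard := Set.ncard_le_ncard (range_subset_iff.2 hfs) (toFinite s)
  rw [ncard_range_of_injective hf.injective, Nat.card_eq_fintype_card, Fintype.card_fin]
    at hcard
  omega

theorem chainLength_lt_of_forall_lt {s t : Set Q} {p : Q} (hs : s.Nonempty) (hst : s ⊆ t)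
    (hp : p ∈ t) (hlt : ∀ z ∈ s, p < z) : chainLength s < chainLength t := by
  obtain ⟨f, hf, hfs⟩ := exists_strictMono_chainLength hs
  refine Nat.lt_of_succ_le (le_chainLength (f := Fin.cons p f)
    (Fin.strictMono_cons.2 ⟨fun j => hlt _ (hfs j), hf⟩) fun i => ?_)
  cases i using Fin.cases with
  | zero => exact hp
  | succ i => exact hst (hfs i)

theorem chainLength_Ici_lt_of_lt {p q : Q} (hpq : p < q) :
    chainLength (Ici q) < chainLength (Ici p) :=
  chainLength_lt_of_forall_lt nonempty_Ici (Ici_subset_Ici.2 hpq.le) self_mem_Ici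
    fun _ hz => hpq.trans_le hz

theorem chainLength_Icc_lt_of_lt {p q b : Q} (hpq : p < q) (hqb : q ≤ b) :
    chainLength (Icc q b) < chainLength (Icc p b) :=
  chainLength_lt_of_forall_lt (nonempty_Icc.2 hqb) (Icc_subset_Icc_left hpq.le)
    ⟨le_rfl, hpq.le.trans hqb⟩ fun _ hz => hpq.trans_le hz.1

end ChainLength

theorem StrictAnti.apply_last_add_le {Q : Type*} [Preorder Q] {w : Q → ℕ} (hw : StrictAnti w)
    {n : ℕ} {f : Fin (n + 1) → Q} (hf : StrictMono f) : w (f (Fin.last n)) + n ≤ w (f 0) := by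
  suffices h : ∀ i : Fin (n + 1), w (f i) + i ≤ w (f 0) by simpa using h (Fin.last n)
  intro i
  induction i using Fin.induction with
  | zero => simp
  | succ i ih =>
    have := hw (hf (Fin.castSucc_lt_succ (i := i)))
    simp only [Fin.val_succ, Fin.val_castSucc] at ih ⊢
    omega

section

variable {Q : Type*} [PartialOrder Q] [Finite Q]

theorem heightN_add_le_of_strictAnti [OrderBot Q] {w : Q → ℕ} (hw : StrictAnti w) (p : Q) :
    heightN p + w p ≤ w ⊥ := by
  obtain ⟨f, hf, hfp⟩ := exists_strictMono_chainLength (s := Iic p) nonempty_Iic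
  have := hw.apply_last_add_le hf
  have := hw.antitone (hfp (Fin.last _))
  have := hw.antitone (bot_le (a := f 0))
  rw [heightN_eq_chainLength]
  omega

theorem depthN_le_of_strictAnti_s6 {w : Q → ℕ} (hw : StrictAnti w) (p : Q) : depthN p ≤ w p := by
  obtain ⟨f, hf, hfp⟩ := exists_strictMono_chainLength (s := Ici p) nonempty_Ici
  have := hw.apply_last_add_le hf
  have := hw.antitone (hfp 0)
  rw [depthN_eq_chainLength]
  omega

theorem CovBy.chainLength_Icc_le_one {a b : Q} (hab : a ⋖ b) : chainLength (Icc a b) ≤ 1 := by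
  have := chainLength_lt_ncard (nonempty_Icc.2 hab.le)
  rw [hab.Icc_eq, ncard_pair hab.lt.ne] at this
  rw [hab.Icc_eq]
  omega

theorem chainLength_Ici_top [OrderTop Q] : chainLength (Ici (⊤ : Q)) = 0 := by
  have := chainLength_lt_ncard (singleton_nonempty (⊤ : Q))
  rw [ncard_singleton] at this
  rw [Ici_top]
  omega

theorem CovBy.exists_strictAnti_top_eq_zero_le_add_one [OrderTop Q] {a b : Q} (hab : a ⋖ b) :
    ∃ v : Q → ℕ, StrictAnti v ∧ v ⊤ = 0 ∧ v a ≤ v b + 1 := by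
  set D : Q → ℕ := fun p => chainLength (Ici p)
  set E : Q → ℕ := fun p => chainLength (Icc p b)
  have hEa : E a ≤ 1 := hab.chainLength_Icc_le_one
  have hD_top : D ⊤ = 0 := chainLength_Ici_top
  refine ⟨fun p => max (D p) (if p ≤ b then D a - 1 + E p else 0), fun p q hpq => ?_, ?_, ?_⟩
  · have hDpq : D q < D p := chainLength_Ici_lt_of_lt hpq
    by_cases hqb : q ≤ b
    · have hEpq : E q < E p := chainLength_Icc_lt_of_lt hpq hqb
      simp only [hqb, hpq.le.trans hqb, if_true]
      omega
    · by_cases hpb : p ≤ b <;> simp only [hpb, hqb, if_true, if_false] <;> omega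
  · by_cases hb : ⊤ ≤ b
    · obtain rfl := top_le_iff.1 hb
      have hE_top : E ⊤ ≤ D ⊤ := chainLength_mono Icc_subset_Ici_self
      have hDa : D a = E a := by simp only [D, E, Icc_top]
      simp only [le_refl, if_true]
      omega
    · simp only [hb, if_false]
      omega
  · simp only [le_refl, if_true, hab.le]
    omega

end

section TOrder

variable {P : Type*} [PartialOrder P]

theorem Tge.refl {v : Hat P → ℕ} : Tge P v v := ⟨fun _ => le_rfl, fun _ _ _ => by simp⟩

theorem Tge.trans {u v w : Hat P → ℕ} (huv : Tge P u v) (hvw : Tge P v w) : Tge P u w := by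
  refine ⟨fun p => (hvw.1 p).trans (huv.1 p), fun p q hpq => ?_⟩
  have := huv.2 p q hpq
  have := hvw.2 p q hpq
  have := huv.1 p; have := huv.1 q; have := hvw.1 p; have := hvw.1 q
  omega

theorem Tge.apply_le_apply_add {v w : Hat P → ℕ} (h : Tge P v w) {p q : Hat P} (hpq : p ≤ q)
    {k : ℕ} (hv : v p ≤ v q + k) : w p ≤ w q + k := by
  have := h.2 p q hpq
  have := h.1 p; have := h.1 q
  omega

theorem exists_isMinT_tge [Finite P] {v : Hat P → ℕ} (hv : memT P v) :
    ∃ w, IsMinT P w ∧ Tge P v w := by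
  obtain ⟨w, ⟨hw, hvw⟩, hmin⟩ :=
    wellFounded_lt.has_min {w | memT P w ∧ Tge P v w} ⟨v, hv, Tge.refl⟩
  refine ⟨w, ⟨hw, fun w' hw' hww' => by_contra fun hne => ?_⟩, hvw⟩
  exact hmin w' ⟨hw', hvw.trans hww'⟩ (lt_of_le_of_ne hww'.1 hne)

end TOrder

theorem toHat_covBy_toHat {P : Type*} [PartialOrder P] {x y : P} (h : y ⋖ x) :
    toHat y ⋖ toHat x :=
  WithBot.coe_covBy_coe.2 (WithTop.coe_covBy_coe.2 h)

/-- **Necessary condition for levelness.** If every minimal element `v` of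
`T(P)` satisfies `v(-∞) = rank (Hat P)` (i.e. the lattice `I(P)` is level),
then `height(x) + depth(y) ≤ rank (Hat P) + 1` for all `x, y ∈ P` such that `x`
covers `y`. -/
theorem level_implies_height_add_depth_le (P : Type*) [Fintype P] [PartialOrder P]
    (h : ∀ v : Hat P → ℕ, IsMinT P v → v ⊥ = rankN (Hat P)) :
    ∀ x y : P, y ⋖ x →
      heightN (toHat x) + depthN (toHat y) ≤ rankN (Hat P) + 1 := by
  intro x y hyx
  obtain ⟨v, hv, hv_top, hvyx⟩ :=
    (toHat_covBy_toHat hyx).exists_strictAnti_top_eq_zero_le_add_one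
  obtain ⟨w, hw, hvw⟩ := exists_isMinT_tge (P := P) ⟨hv_top, hv⟩
  have hwyx := hvw.apply_le_apply_add (toHat_covBy_toHat hyx).le hvyx
  have hx := heightN_add_le_of_strictAnti hw.1.2 (toHat x)
  have hy := depthN_le_of_strictAnti_s6 hw.1.2 (toHat y)
  rw [← h w hw]
  omega
end
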